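/- arXiv:1511.02681 — 4 statements merged into one kernel-verified Lean document; each statement's English description precedes it below -/
import Mathlib

section
/- Under the setting of the parametrized stress problem, the function φ : ℝ → ℝ ∪ {+∞} defined by φ(ζ) = I(σ(ζ)) for ζ ∈ D (where σ(ζ) is the unique minimizer of I(τ) = ½‖τ‖² over Λ_ζ ∩ P) and φ(ζ) = +∞ otherwise, is convex on ℝ: for ζ₀, ζ₁ ∈ D and λ ∈ [0,1], the convex combination (1−λ)σ(ζ₀) + λσ(ζ₁) lies in Λ_{(1−λ)ζ₀+λζ₁} ∩ P, hence φ((1−λ)ζ₀+λζ₁) ≤ (1−λ)φ(ζ₀) + λφ(ζ₁). -/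
open Set

section AdmissibleSet

variable {H V : Type*} [NormedAddCommGroup H] [InnerProductSpace ℝ H]
  [AddCommGroup V] [Module ℝ V]

def admissibleSet (B : V →ₗ[ℝ] H) (L : V →ₗ[ℝ] ℝ) (ζ : ℝ) : Set H :=
  {τ | ∀ v, inner ℝ τ (B v) = ζ * L v}

theorem smul_add_smul_mem_admissibleSet {B : V →ₗ[ℝ] H} {L : V →ₗ[ℝ] ℝ} {ζ₀ ζ₁ : ℝ} {τ₀ τ₁ : H}
    (a b : ℝ) (h₀ : τ₀ ∈ admissibleSet B L ζ₀) (h₁ : τ₁ ∈ admissibleSet B L ζ₁) :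
    a • τ₀ + b • τ₁ ∈ admissibleSet B L (a * ζ₀ + b * ζ₁) := fun v => by
  rw [inner_add_left, real_inner_smul_left, real_inner_smul_left, h₀ v, h₁ v]
  ring

end AdmissibleSet

theorem convexOn_half_norm_sq {E : Type*} [SeminormedAddCommGroup E] [NormedSpace ℝ E] :
    ConvexOn ℝ univ fun x : E => (1 / 2 : ℝ) * ‖x‖ ^ 2 :=
  ((convexOn_norm convex_univ).pow (fun x _ => norm_nonneg x) 2).smul (by norm_num)

theorem sInf_image_eq_of_isMinOn {α β : Type*} [ConditionallyCompleteLattice β] {f : α → β}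
    {s : Set α} {a : α} (ha : a ∈ s) (hmin : IsMinOn f s a) : sInf (f '' s) = f a :=
  IsLeast.csInf_eq ⟨mem_image_of_mem f ha, forall_mem_image.2 hmin⟩

theorem sInf_image_le_of_nonneg {α : Type*} {f : α → ℝ} (hf : ∀ x, 0 ≤ f x) {s : Set α} {a : α}
    (ha : a ∈ s) : sInf (f '' s) ≤ f a :=
  csInf_le ⟨0, forall_mem_image.2 fun x _ => hf x⟩ (mem_image_of_mem f ha)

theorem phi_convex_general
    {H V : Type*} [NormedAddCommGroup H] [InnerProductSpace ℝ H]
    [AddCommGroup V] [Module ℝ V]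
    (P : Set H) (hPconv : Convex ℝ P)
    (B : V →ₗ[ℝ] H) (L : V →ₗ[ℝ] ℝ)
    (Λ : ℝ → Set H)
    (hΛ : ∀ ζ, Λ ζ = {τ : H | ∀ v : V, (inner ℝ τ (B v) : ℝ) = ζ * L v})
    (φ : ℝ → ℝ)
    (hφ : ∀ ζ, φ ζ = sInf ((fun τ : H => (1 / 2 : ℝ) * ‖τ‖ ^ 2) '' (Λ ζ ∩ P)))
    (ζ₀ ζ₁ : ℝ)
    (σ₀ σ₁ : H) (hσ₀ : σ₀ ∈ Λ ζ₀ ∩ P) (hσ₁ : σ₁ ∈ Λ ζ₁ ∩ P)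
    (hσ₀min : ∀ τ ∈ Λ ζ₀ ∩ P, (1 / 2 : ℝ) * ‖σ₀‖ ^ 2 ≤ (1 / 2 : ℝ) * ‖τ‖ ^ 2)
    (hσ₁min : ∀ τ ∈ Λ ζ₁ ∩ P, (1 / 2 : ℝ) * ‖σ₁‖ ^ 2 ≤ (1 / 2 : ℝ) * ‖τ‖ ^ 2)
    (lam : ℝ) (hlam0 : 0 ≤ lam) (hlam1 : lam ≤ 1) :
    (1 - lam) • σ₀ + lam • σ₁ ∈ Λ ((1 - lam) * ζ₀ + lam * ζ₁) ∩ P ∧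
      φ ((1 - lam) * ζ₀ + lam * ζ₁) ≤ (1 - lam) * φ ζ₀ + lam * φ ζ₁ := by
  obtain rfl : Λ = admissibleSet B L := funext hΛ
  have hmem : (1 - lam) • σ₀ + lam • σ₁ ∈ admissibleSet B L ((1 - lam) * ζ₀ + lam * ζ₁) ∩ P :=
    ⟨smul_add_smul_mem_admissibleSet _ _ hσ₀.1 hσ₁.1,
      hPconv hσ₀.2 hσ₁.2 (sub_nonneg.2 hlam1) hlam0 (sub_add_cancel 1 lam)⟩
  refine ⟨hmem, ?_⟩
  set I : H → ℝ := fun τ => (1 / 2 : ℝ) * ‖τ‖ ^ 2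
  have hφ₀ : φ ζ₀ = I σ₀ := (hφ ζ₀).trans (sInf_image_eq_of_isMinOn hσ₀ hσ₀min)
  have hφ₁ : φ ζ₁ = I σ₁ := (hφ ζ₁).trans (sInf_image_eq_of_isMinOn hσ₁ hσ₁min)
  calc φ ((1 - lam) * ζ₀ + lam * ζ₁) ≤ I ((1 - lam) • σ₀ + lam • σ₁) :=
        (hφ _).trans_le (sInf_image_le_of_nonneg (fun τ => by positivity) hmem)
    _ ≤ (1 - lam) * I σ₀ + lam * I σ₁ :=
        convexOn_half_norm_sq.2 (mem_univ σ₀) (mem_univ σ₁) (sub_nonneg.2 hlam1) hlam0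
          (sub_add_cancel 1 lam)
    _ = (1 - lam) * φ ζ₀ + lam * φ ζ₁ := by rw [hφ₀, hφ₁]

/-- convexity of `φ`: the convex combination of minimizers is
admissible for the convex combination of load parameters, hence
`φ((1−λ)ζ₀+λζ₁) ≤ (1−λ)φ(ζ₀) + λφ(ζ₁)`. -/
theorem phi_convex
    {H V : Type*} [NormedAddCommGroup H] [InnerProductSpace ℝ H]
    [AddCommGroup V] [Module ℝ V]
    (P : Set H) (hPclosed : IsClosed P) (hPconv : Convex ℝ P) (hPne : P.Nonempty)
    (B : V →ₗ[ℝ] H) (L : V →ₗ[ℝ] ℝ)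
    (Λ : ℝ → Set H)
    (hΛ : ∀ ζ, Λ ζ = {τ : H | ∀ v : V, (inner ℝ τ (B v) : ℝ) = ζ * L v})
    (φ : ℝ → ℝ)
    (hφ : ∀ ζ, φ ζ = sInf ((fun τ : H => (1 / 2 : ℝ) * ‖τ‖ ^ 2) '' (Λ ζ ∩ P)))
    (ζ₀ ζ₁ : ℝ) (hζ₀ : 0 ≤ ζ₀) (hζ₁ : 0 ≤ ζ₁)
    (σ₀ σ₁ : H) (hσ₀ : σ₀ ∈ Λ ζ₀ ∩ P) (hσ₁ : σ₁ ∈ Λ ζ₁ ∩ P)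
    (hσ₀min : ∀ τ ∈ Λ ζ₀ ∩ P, (1 / 2 : ℝ) * ‖σ₀‖ ^ 2 ≤ (1 / 2 : ℝ) * ‖τ‖ ^ 2)
    (hσ₁min : ∀ τ ∈ Λ ζ₁ ∩ P, (1 / 2 : ℝ) * ‖σ₁‖ ^ 2 ≤ (1 / 2 : ℝ) * ‖τ‖ ^ 2)
    (lam : ℝ) (hlam0 : 0 ≤ lam) (hlam1 : lam ≤ 1) :
    (1 - lam) • σ₀ + lam • σ₁ ∈ Λ ((1 - lam) * ζ₀ + lam * ζ₁) ∩ P ∧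
      φ ((1 - lam) * ζ₀ + lam * ζ₁) ≤ (1 - lam) * φ ζ₀ + lam * φ ζ₁ :=
  phi_convex_general P hPconv B L Λ hΛ φ hφ ζ₀ ζ₁ σ₀ σ₁ hσ₀ hσ₁ hσ₀min hσ₁min lam hlam0 hlam1
end

section
/- Under the assumptions (L1)–(L3) of the deformation plasticity problem, the function φ is strictly convex on D: if ζ₀ ≠ ζ₁ are both in D and λ ∈ (0,1), then φ((1−λ)ζ₀+λζ₁) < (1−λ)φ(ζ₀)+λφ(ζ₁). The key point is that σ(ζ₀) ≠ σ(ζ₁) (since L ≠ 0 implies distinct loading parameters give distinct minimizers) and strict convexity of the squared norm. -/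
/-! The values `φ ζ₀`, `φ ζ₁` are attained at `σ₀`, `σ₁`, and the constraint `τ ∈ Λ ζ` is affine
in `(τ, ζ)`, so `(1 - λ) σ₀ + λ σ₁` is admissible for the intermediate load and bounds
`φ ((1 - λ) ζ₀ + λ ζ₁)` from above. Since `L ≠ 0`, one `σ` cannot be admissible for two loads,
so `σ₀ ≠ σ₁` and strict convexity of `½‖·‖²` makes the bound strict. -/

open Set

section HalfNormSq

variable {E : Type*} [NormedAddCommGroup E] [InnerProductSpace ℝ E]

theorem strictConvexOn_univ_half_mul_norm_sq :
    StrictConvexOn ℝ univ fun x : E => (1 / 2 : ℝ) * ‖x‖ ^ 2 :=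
  (strongConvexOn_iff_convex (m := 1).2 <| by
    simpa only [one_div, sub_self] using convexOn_const (0 : ℝ) convex_univ).strictConvexOn one_pos

theorem half_mul_norm_sq_convexCombo_lt {x y : E} (hxy : x ≠ y) {t : ℝ} (ht0 : 0 < t)
    (ht1 : t < 1) :
    (1 / 2 : ℝ) * ‖(1 - t) • x + t • y‖ ^ 2 <
      (1 - t) * ((1 / 2 : ℝ) * ‖x‖ ^ 2) + t * ((1 / 2 : ℝ) * ‖y‖ ^ 2) :=
  strictConvexOn_univ_half_mul_norm_sq.2 (mem_univ x) (mem_univ y) hxy (sub_pos.2 ht1) ht0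
    (sub_add_cancel 1 t)

end HalfNormSq

theorem csInf_image_le_of_nonneg {α : Type*} {f : α → ℝ} (hf : ∀ a, 0 ≤ f a) {S : Set α}
    {a : α} (ha : a ∈ S) : sInf (f '' S) ≤ f a :=
  csInf_le ⟨0, forall_mem_image.2 fun b _ => hf b⟩ (mem_image_of_mem f ha)

theorem csInf_image_eq_of_isMinOn {α : Type*} {f : α → ℝ} {S : Set α} {a : α} (ha : a ∈ S)
    (hmin : IsMinOn f S a) : sInf (f '' S) = f a :=
  IsLeast.csInf_eq ⟨mem_image_of_mem f ha, forall_mem_image.2 (isMinOn_iff.1 hmin)⟩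

section Constraint

variable {H V : Type*} [NormedAddCommGroup H] [InnerProductSpace ℝ H] [AddCommGroup V]
  [Module ℝ V] {B : V →ₗ[ℝ] H} {L : V →ₗ[ℝ] ℝ}

theorem inner_smul_add_smul_left_eq_mul {σ₀ σ₁ : H} {ζ₀ ζ₁ : ℝ}
    (h₀ : ∀ v, inner ℝ σ₀ (B v) = ζ₀ * L v) (h₁ : ∀ v, inner ℝ σ₁ (B v) = ζ₁ * L v) (a b : ℝ)
    (v : V) : inner ℝ (a • σ₀ + b • σ₁) (B v) = (a * ζ₀ + b * ζ₁) * L v := by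
  rw [inner_add_left, real_inner_smul_left, real_inner_smul_left, h₀, h₁]
  ring

theorem eq_of_inner_eq_mul_of_ne_zero (hL : L ≠ 0) {σ : H} {ζ₀ ζ₁ : ℝ}
    (h₀ : ∀ v, inner ℝ σ (B v) = ζ₀ * L v) (h₁ : ∀ v, inner ℝ σ (B v) = ζ₁ * L v) : ζ₀ = ζ₁ :=
  smul_left_injective ℝ hL <| LinearMap.ext fun v => (h₀ v).symm.trans (h₁ v)

end Constraint

theorem phi_strictly_convex_general
    {H V : Type*} [NormedAddCommGroup H] [InnerProductSpace ℝ H]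
    [AddCommGroup V] [Module ℝ V]
    (P : Set H) (hPconv : Convex ℝ P)
    (B : V →ₗ[ℝ] H) (L : V →ₗ[ℝ] ℝ) (hL : L ≠ 0)
    (Λ : ℝ → Set H)
    (hΛ : ∀ ζ, Λ ζ = {τ : H | ∀ v : V, (inner ℝ τ (B v) : ℝ) = ζ * L v})
    (φ : ℝ → ℝ)
    (hφ : ∀ ζ, φ ζ = sInf ((fun τ : H => (1 / 2 : ℝ) * ‖τ‖ ^ 2) '' (Λ ζ ∩ P)))
    (ζ₀ ζ₁ : ℝ) (hne : ζ₀ ≠ ζ₁)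
    (σ₀ σ₁ : H) (hσ₀ : σ₀ ∈ Λ ζ₀ ∩ P) (hσ₁ : σ₁ ∈ Λ ζ₁ ∩ P)
    (hσ₀min : ∀ τ ∈ Λ ζ₀ ∩ P, (1 / 2 : ℝ) * ‖σ₀‖ ^ 2 ≤ (1 / 2 : ℝ) * ‖τ‖ ^ 2)
    (hσ₁min : ∀ τ ∈ Λ ζ₁ ∩ P, (1 / 2 : ℝ) * ‖σ₁‖ ^ 2 ≤ (1 / 2 : ℝ) * ‖τ‖ ^ 2)
    (lam : ℝ) (hlam0 : 0 < lam) (hlam1 : lam < 1) :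
    φ ((1 - lam) * ζ₀ + lam * ζ₁) < (1 - lam) * φ ζ₀ + lam * φ ζ₁ := by
  have h₀ : ∀ v, inner ℝ σ₀ (B v) = ζ₀ * L v := by
    simpa only [hΛ, mem_ofPred_eq] using hσ₀.1
  have h₁ : ∀ v, inner ℝ σ₁ (B v) = ζ₁ * L v := by
    simpa only [hΛ, mem_ofPred_eq] using hσ₁.1
  have hσne : σ₀ ≠ σ₁ := fun h => hne (eq_of_inner_eq_mul_of_ne_zero hL h₀ (h ▸ h₁))
  have hcombo : (1 - lam) • σ₀ + lam • σ₁ ∈ Λ ((1 - lam) * ζ₀ + lam * ζ₁) ∩ P := by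
    refine ⟨?_, hPconv hσ₀.2 hσ₁.2 (sub_pos.2 hlam1).le hlam0.le (sub_add_cancel 1 lam)⟩
    rw [hΛ]
    exact inner_smul_add_smul_left_eq_mul h₀ h₁ _ _
  calc φ ((1 - lam) * ζ₀ + lam * ζ₁)
      ≤ (1 / 2 : ℝ) * ‖(1 - lam) • σ₀ + lam • σ₁‖ ^ 2 :=
        (hφ _).trans_le (csInf_image_le_of_nonneg (fun _ => by positivity) hcombo)
    _ < (1 - lam) * ((1 / 2 : ℝ) * ‖σ₀‖ ^ 2) + lam * ((1 / 2 : ℝ) * ‖σ₁‖ ^ 2) :=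
        half_mul_norm_sq_convexCombo_lt hσne hlam0 hlam1
    _ = (1 - lam) * φ ζ₀ + lam * φ ζ₁ := by
        rw [hφ ζ₀, hφ ζ₁, csInf_image_eq_of_isMinOn hσ₀ (isMinOn_iff.2 hσ₀min),
          csInf_image_eq_of_isMinOn hσ₁ (isMinOn_iff.2 hσ₁min)]

/-- strict convexity of `φ` on `D`: for distinct admissible load
parameters the minimizers differ (since `L ≠ 0`), and strict convexity of the
squared norm gives a strict inequality. -/
theorem phi_strictly_convex
    {H V : Type*} [NormedAddCommGroup H] [InnerProductSpace ℝ H]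
    [AddCommGroup V] [Module ℝ V]
    (P : Set H) (hPclosed : IsClosed P) (hPconv : Convex ℝ P)
    (B : V →ₗ[ℝ] H) (L : V →ₗ[ℝ] ℝ) (hL : L ≠ 0)
    (Λ : ℝ → Set H)
    (hΛ : ∀ ζ, Λ ζ = {τ : H | ∀ v : V, (inner ℝ τ (B v) : ℝ) = ζ * L v})
    (φ : ℝ → ℝ)
    (hφ : ∀ ζ, φ ζ = sInf ((fun τ : H => (1 / 2 : ℝ) * ‖τ‖ ^ 2) '' (Λ ζ ∩ P)))
    (ζ₀ ζ₁ : ℝ) (hζ₀ : 0 ≤ ζ₀) (hζ₁ : 0 ≤ ζ₁) (hne : ζ₀ ≠ ζ₁)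
    (σ₀ σ₁ : H) (hσ₀ : σ₀ ∈ Λ ζ₀ ∩ P) (hσ₁ : σ₁ ∈ Λ ζ₁ ∩ P)
    (hσ₀min : ∀ τ ∈ Λ ζ₀ ∩ P, (1 / 2 : ℝ) * ‖σ₀‖ ^ 2 ≤ (1 / 2 : ℝ) * ‖τ‖ ^ 2)
    (hσ₁min : ∀ τ ∈ Λ ζ₁ ∩ P, (1 / 2 : ℝ) * ‖σ₁‖ ^ 2 ≤ (1 / 2 : ℝ) * ‖τ‖ ^ 2)
    (lam : ℝ) (hlam0 : 0 < lam) (hlam1 : lam < 1) :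
    φ ((1 - lam) * ζ₀ + lam * ζ₁) < (1 - lam) * φ ζ₀ + lam * φ ζ₁ :=
  phi_strictly_convex_general P hPconv B L hL Λ hΛ φ hφ ζ₀ ζ₁ hne σ₀ σ₁ hσ₀ hσ₁ hσ₀min hσ₁min lam
    hlam0 hlam1
end

section
/- Suppose ζ_lim := sup D < +∞ and ζ_lim ∉ D (i.e., Λ_{ζ_lim} ∩ P = ∅). Then φ(ζ) → +∞ as ζ → ζ_lim from the left. (If instead φ were bounded along a sequence ζ_j → ζ_lim⁻, the minimizers σ(ζ_j) would be bounded in H, a weak limit σ̄ would belong to Λ_{ζ_lim} ∩ P by weak closedness, contradicting emptiness.) -/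
/-!
Suppose `φ` stays below some `M` arbitrarily close to `ζ_lim` and let `ℓ` be its (finite)
liminf there. The feasible pairs `(ζ, τ)` form a closed convex set in `ℝ × H`, so the midpoint of
two near-minimizers for loads near `ζ_lim` is feasible for the midpoint load, where its energy is
at least about `ℓ`. The parallelogram law then forces the two near-minimizers to be close: the
near-minimizing pairs form a Cauchy filter, and its limit is feasible for `ζ_lim` itself.
This strong-convergence argument replaces the extraction of a weakly convergent subsequence.
-/

open Filter Set Topology

section MinEnergy

variable {H : Type*} [Norm H] {S : Set H}

/-- Note `minEnergy ∅ = 0`, since `sInf ∅ = 0` in `ℝ`. -/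
noncomputable def minEnergy (S : Set H) : ℝ :=
  sInf ((fun τ : H => (1 / 2 : ℝ) * ‖τ‖ ^ 2) '' S)

lemma minEnergy_nonneg (S : Set H) : 0 ≤ minEnergy S :=
  Real.sInf_nonneg <| by rintro _ ⟨τ, -, rfl⟩; positivity

lemma minEnergy_le {τ : H} (hτ : τ ∈ S) : minEnergy S ≤ 1 / 2 * ‖τ‖ ^ 2 :=
  csInf_le ⟨0, by rintro _ ⟨σ, -, rfl⟩; positivity⟩ (mem_image_of_mem _ hτ)

lemma exists_lt_of_minEnergy_lt (hS : S.Nonempty) {c : ℝ} (h : minEnergy S < c) :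
    ∃ τ ∈ S, 1 / 2 * ‖τ‖ ^ 2 < c := by
  obtain ⟨_, ⟨τ, hτ, rfl⟩, hc⟩ := exists_lt_of_csInf_lt (hS.image _) h
  exact ⟨τ, hτ, hc⟩

variable {G : Set (ℝ × H)} {a ℓ : ℝ}

noncomputable def nearMinimizingPairs (G : Set (ℝ × H)) (a ℓ : ℝ) : Filter (ℝ × H) :=
  comap (fun p => (p.1, 1 / 2 * ‖p.2‖ ^ 2)) (𝓝[<] a ×ˢ 𝓝 ℓ) ⊓ 𝓟 G

lemma hasBasis_nearMinimizingPairs :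
    (nearMinimizingPairs G a ℓ).HasBasis (fun lδ : ℝ × ℝ => lδ.1 < a ∧ 0 < lδ.2) fun lδ =>
      {p | p.1 ∈ Ioo lδ.1 a ∧ 1 / 2 * ‖p.2‖ ^ 2 ∈ Ioo (ℓ - lδ.2) (ℓ + lδ.2)} ∩ G :=
  (((nhdsLT_basis a).prod (nhds_basis_Ioo_pos ℓ)).comap _).inf_principal G

lemma tendsto_fst_nearMinimizingPairs : Tendsto Prod.fst (nearMinimizingPairs G a ℓ) (𝓝 a) :=
  (tendsto_fst.comp tendsto_comap).mono_left inf_le_left |>.mono_right nhdsWithin_le_nhds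

lemma nearMinimizingPairs_neBot (hne : ∀ᶠ ζ in 𝓝[<] a, (Prod.mk ζ ⁻¹' G).Nonempty)
    (hlow : ∀ δ > 0, ∀ᶠ ζ in 𝓝[<] a, ℓ - δ < minEnergy (Prod.mk ζ ⁻¹' G))
    (hhigh : ∀ δ > 0, ∃ᶠ ζ in 𝓝[<] a, minEnergy (Prod.mk ζ ⁻¹' G) < ℓ + δ) :
    (nearMinimizingPairs G a ℓ).NeBot :=
  hasBasis_nearMinimizingPairs.neBot_iff.2 fun {lδ} ⟨hl, hδ⟩ => by
    obtain ⟨ζ, hEζ, hζ, hℓζ, hζne⟩ := ((hhigh _ hδ).and_eventually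
      ((show ∀ᶠ ζ in 𝓝[<] a, ζ ∈ Ioo lδ.1 a from Ioo_mem_nhdsLT hl).and
        ((hlow _ hδ).and hne))).exists
    obtain ⟨τ, hτ, hτE⟩ := exists_lt_of_minEnergy_lt hζne hEζ
    exact ⟨(ζ, τ), ⟨hζ, hℓζ.trans_le (minEnergy_le hτ), hτE⟩, hτ⟩

end MinEnergy

section FiberEnergy

variable {H : Type*} [NormedAddCommGroup H] [InnerProductSpace ℝ H]

lemma dist_sq_lt_of_energy_lt {x y : H} {c δ : ℝ} (hx : 1 / 2 * ‖x‖ ^ 2 < c + δ)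
    (hy : 1 / 2 * ‖y‖ ^ 2 < c + δ) (hm : c - δ < 1 / 2 * ‖midpoint ℝ x y‖ ^ 2) :
    dist x y ^ 2 < 16 * δ := by
  have := EuclideanGeometry.dist_sq_add_dist_sq_eq_two_mul_dist_midpoint_sq_add_half_dist_sq
    (0 : H) x y
  simp only [dist_zero_left] at this
  nlinarith

variable {G : Set (ℝ × H)} {a ℓ : ℝ}

lemma cauchy_map_snd_nearMinimizingPairs (hGconv : Convex ℝ G)
    [(nearMinimizingPairs G a ℓ).NeBot]
    (hlow : ∀ δ > 0, ∀ᶠ ζ in 𝓝[<] a, ℓ - δ < minEnergy (Prod.mk ζ ⁻¹' G)) :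
    Cauchy ((nearMinimizingPairs G a ℓ).map Prod.snd) := by
  refine Metric.cauchy_iff.2 ⟨inferInstance, fun ε hε => ?_⟩
  obtain ⟨l, hl, hlE⟩ := mem_nhdsLT_iff_exists_Ioo_subset.1 (hlow (ε ^ 2 / 16) (by positivity))
  refine ⟨_, image_mem_map (hasBasis_nearMinimizingPairs.mem_of_mem (i := (l, ε ^ 2 / 16))
    ⟨hl, by positivity⟩), ?_⟩
  rintro _ ⟨p, ⟨⟨hp, hpE⟩, hpG⟩, rfl⟩ _ ⟨q, ⟨⟨hq, hqE⟩, hqG⟩, rfl⟩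
  have hmid : (midpoint ℝ p q).1 ∈ Ioo l a := (convex_Ioo l a).midpoint_mem (𝕜 := ℝ) hp hq
  have := dist_sq_lt_of_energy_lt hpE.2 hqE.2
    ((hlE hmid).trans_le (minEnergy_le (hGconv.midpoint_mem hpG hqG)))
  nlinarith

variable [CompleteSpace H]

theorem nonempty_fiber_of_frequently_minEnergy_lt (hGc : IsClosed G) (hGconv : Convex ℝ G)
    (hne : ∀ᶠ ζ in 𝓝[<] a, (Prod.mk ζ ⁻¹' G).Nonempty) {M : ℝ}
    (hM : ∃ᶠ ζ in 𝓝[<] a, minEnergy (Prod.mk ζ ⁻¹' G) < M) :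
    (Prod.mk a ⁻¹' G).Nonempty := by
  set ℓ := liminf (fun ζ => minEnergy (Prod.mk ζ ⁻¹' G)) (𝓝[<] a)
  have hlow : ∀ δ > 0, ∀ᶠ ζ in 𝓝[<] a, ℓ - δ < minEnergy (Prod.mk ζ ⁻¹' G) := fun δ hδ =>
    eventually_lt_of_lt_liminf (by linarith)
      (isBoundedUnder_of_eventually_ge (Eventually.of_forall fun ζ => minEnergy_nonneg _))
  have hhigh : ∀ δ > 0, ∃ᶠ ζ in 𝓝[<] a, minEnergy (Prod.mk ζ ⁻¹' G) < ℓ + δ := fun δ hδ =>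
    frequently_lt_of_liminf_lt (IsCoboundedUnder.of_frequently_le (hM.mono fun _ h => h.le))
      (by linarith)
  have := nearMinimizingPairs_neBot hne hlow hhigh
  obtain ⟨σ, hσ⟩ := CompleteSpace.complete (cauchy_map_snd_nearMinimizingPairs hGconv hlow)
  exact ⟨σ, hGc.mem_of_tendsto (tendsto_fst_nearMinimizingPairs.prodMk_nhds hσ)
    (mem_inf_of_right (mem_principal_self G))⟩

theorem tendsto_minEnergy_fiber_atTop (hGc : IsClosed G) (hGconv : Convex ℝ G)
    (hne : ∀ᶠ ζ in 𝓝[<] a, (Prod.mk ζ ⁻¹' G).Nonempty) (hempty : Prod.mk a ⁻¹' G = ∅) :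
    Tendsto (fun ζ => minEnergy (Prod.mk ζ ⁻¹' G)) (𝓝[<] a) atTop := by
  refine tendsto_atTop.2 fun M => ?_
  by_contra hM
  simpa [hempty] using nonempty_fiber_of_frequently_minEnergy_lt hGc hGconv hne
    ((not_eventually.1 hM).mono fun _ => not_le.1)

end FiberEnergy

section LoadGraph

variable {H V : Type*} [NormedAddCommGroup H] [InnerProductSpace ℝ H] [AddCommGroup V]
  [Module ℝ V] (B : V →ₗ[ℝ] H) (L : V →ₗ[ℝ] ℝ)

lemma isClosed_setOf_forall_inner_eq_mul :
    IsClosed {p : ℝ × H | ∀ v, inner ℝ p.2 (B v) = p.1 * L v} := by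
  simp only [ofPred_forall]
  exact isClosed_iInter fun v => isClosed_eq (by fun_prop) (by fun_prop)

lemma convex_setOf_forall_inner_eq_mul :
    Convex ℝ {p : ℝ × H | ∀ v, inner ℝ p.2 (B v) = p.1 * L v} := by
  intro p hp q hq s t _ _ _ v
  simp only [Prod.fst_add, Prod.snd_add, Prod.smul_fst, Prod.smul_snd, inner_add_left,
    real_inner_smul_left, hp v, hq v, smul_eq_mul]
  ring

end LoadGraph

/-- if the limit load `ζ_lim = sup D` is finite and not attained
(`Λ_{ζ_lim} ∩ P = ∅`), then the minimal complementary energy `φ` blows up: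
`φ(ζ) → +∞` as `ζ → ζ_lim⁻`. -/
theorem phi_blows_up_at_limit_load
    {H V : Type*} [NormedAddCommGroup H] [InnerProductSpace ℝ H] [CompleteSpace H]
    [AddCommGroup V] [Module ℝ V]
    (P : Set H) (hPclosed : IsClosed P) (hPconv : Convex ℝ P)
    (B : V →ₗ[ℝ] H) (L : V →ₗ[ℝ] ℝ)
    (Λ : ℝ → Set H)
    (hΛ : ∀ ζ, Λ ζ = {τ : H | ∀ v : V, (inner ℝ τ (B v) : ℝ) = ζ * L v})
    (φ : ℝ → ℝ)
    (hφ : ∀ ζ, φ ζ = sInf ((fun τ : H => (1 / 2 : ℝ) * ‖τ‖ ^ 2) '' (Λ ζ ∩ P)))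
    (ζlim : ℝ) (hζlim : 0 < ζlim)
    (hD : {ζ : ℝ | 0 ≤ ζ ∧ (Λ ζ ∩ P).Nonempty} = Set.Ico 0 ζlim)
    (hempty : Λ ζlim ∩ P = ∅) :
    Filter.Tendsto φ (nhdsWithin ζlim (Set.Iio ζlim)) Filter.atTop := by
  set G := {p : ℝ × H | ∀ v, inner ℝ p.2 (B v) = p.1 * L v} ∩ Prod.snd ⁻¹' P
  have hfiber : ∀ ζ, Prod.mk ζ ⁻¹' G = Λ ζ ∩ P := fun ζ => by rw [hΛ]; rfl
  have hφG : φ = fun ζ => minEnergy (Prod.mk ζ ⁻¹' G) :=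
    funext fun ζ => by rw [hφ, hfiber]; rfl
  have hne : ∀ᶠ ζ in 𝓝[<] ζlim, (Prod.mk ζ ⁻¹' G).Nonempty := by
    filter_upwards [Ioo_mem_nhdsLT hζlim] with ζ hζ
    have hζD : ζ ∈ {ζ : ℝ | 0 ≤ ζ ∧ (Λ ζ ∩ P).Nonempty} := hD ▸ Ioo_subset_Ico_self hζ
    exact hfiber ζ ▸ hζD.2
  rw [hφG]
  exact tendsto_minEnergy_fiber_atTop
    ((isClosed_setOf_forall_inner_eq_mul B L).inter (hPclosed.preimage continuous_snd))
    ((convex_setOf_forall_inner_eq_mul B L).inter (hPconv.linear_preimage (LinearMap.snd ℝ ℝ H)))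
    hne (by rw [hfiber, hempty])
end

section
/- For α ≥ 0, the problem (P*)^α of minimizing J_α(τ) := I(τ) − α ω(τ) over Λ̃_L ∩ P has a unique solution σ; this σ satisfies ψ(α) = ω(σ), and σ is also the solution of the constrained problem (P*)_ζ with ζ = ω(σ) (i.e., σ minimizes I over Λ_{ζL} ∩ P). -/
/-!
Since `L ≠ 0`, the level `ζ` of any `τ ∈ Λ_{ζL}` is read off linearly as `ζ = ⟪w, τ⟫` for a
fixed `w`; hence `ω = ⟪w, ·⟫` on the closed convex cone `Λ̃_L`, and
`J_α(τ) = ½‖τ - α w‖² - ½‖α w‖²` there. The solution `σ` of `(P*)^α` is thus the projection of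
`α w` onto `Λ̃_L ∩ P`, unique by strong convexity. A minimizer `τ₁` of `I` on `Λ_{ψ(α)L} ∩ P`
satisfies `J_α(τ₁) = φ(ψ α) - α ψ(α) ≤ φ(ω σ) - α ω(σ) ≤ J_α(σ)`, so `τ₁ = σ` and
`ψ(α) = ω(σ)`; and `σ` minimizes `I` on its own level, where `ω` is constant.
-/

open scoped InnerProductSpace
open Set

section Quadratic

variable {H : Type*} [NormedAddCommGroup H] [InnerProductSpace ℝ H]

theorem half_norm_sq_sub_inner_eq (u τ : H) :
    1 / 2 * ‖τ‖ ^ 2 - ⟪τ, u⟫_ℝ = 1 / 2 * ‖u - τ‖ ^ 2 - 1 / 2 * ‖u‖ ^ 2 := by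
  rw [norm_sub_sq_real, real_inner_comm]
  ring

theorem strongConvexOn_half_norm_sq_sub_inner {s : Set H} (hs : Convex ℝ s) (u : H) :
    StrongConvexOn s 1 fun τ => 1 / 2 * ‖τ‖ ^ 2 - ⟪τ, u⟫_ℝ := by
  rw [strongConvexOn_iff_convex]
  refine ((innerSL ℝ u).toLinearMap.concaveOn hs).neg.congr fun τ _ => ?_
  simp [real_inner_comm]

theorem existsUnique_isMinOn_half_norm_sq_sub_inner [CompleteSpace H] {K : Set H}
    (hne : K.Nonempty) (hcl : IsClosed K) (hcv : Convex ℝ K) (u : H) :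
    ∃! σ, σ ∈ K ∧ IsMinOn (fun τ => 1 / 2 * ‖τ‖ ^ 2 - ⟪τ, u⟫_ℝ) K σ := by
  obtain ⟨σ, hσ, hdist⟩ := exists_norm_eq_iInf_of_complete_convex hne hcl.isComplete hcv u
  have hstrict := (strongConvexOn_half_norm_sq_sub_inner hcv u).strictConvexOn one_pos
  have hmin : IsMinOn (fun τ => 1 / 2 * ‖τ‖ ^ 2 - ⟪τ, u⟫_ℝ) K σ := fun τ hτ => by
    have hle : ‖u - σ‖ ≤ ‖u - τ‖ :=
      hdist ▸ ciInf_le ⟨0, forall_mem_range.2 fun _ => norm_nonneg _⟩ (⟨τ, hτ⟩ : K)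
    simp only [mem_ofPred_eq, half_norm_sq_sub_inner_eq u]
    gcongr
  exact ⟨σ, ⟨hσ, hmin⟩, fun σ' h => hstrict.eq_of_isMinOn h.2 hmin h.1 hσ⟩

theorem exists_sInf_image_half_norm_sq_eq [CompleteSpace H] {S : Set H}
    (hne : S.Nonempty) (hcl : IsClosed S) (hcv : Convex ℝ S) :
    ∃ τ ∈ S, sInf ((fun τ => 1 / 2 * ‖τ‖ ^ 2) '' S) = 1 / 2 * ‖τ‖ ^ 2 := by
  obtain ⟨τ, ⟨hτ, hmin⟩, -⟩ := existsUnique_isMinOn_half_norm_sq_sub_inner hne hcl hcv 0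
  simp only [inner_zero_right, sub_zero] at hmin
  exact ⟨τ, hτ, IsLeast.csInf_eq ⟨mem_image_of_mem _ hτ, forall_mem_image.2 fun x hx => hmin hx⟩⟩

omit [InnerProductSpace ℝ H] in
theorem sInf_image_half_norm_sq_le {S : Set H} {τ : H} (hτ : τ ∈ S) :
    sInf ((fun τ => 1 / 2 * ‖τ‖ ^ 2) '' S) ≤ 1 / 2 * ‖τ‖ ^ 2 :=
  csInf_le ⟨0, forall_mem_image.2 fun _ _ => by positivity⟩ (mem_image_of_mem _ hτ)

end Quadratic

section Equilibrium

variable {H V : Type*} [NormedAddCommGroup H] [InnerProductSpace ℝ H] [AddCommGroup V]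
  [Module ℝ V] (B : V →ₗ[ℝ] H) (L : V →ₗ[ℝ] ℝ)

/-- The paper's `Λ_{ζL}`. -/
def equilibriumSet (ζ : ℝ) : Set H := {τ | ∀ v, ⟪τ, B v⟫_ℝ = ζ * L v}

theorem isClosed_equilibriumSet (ζ : ℝ) : IsClosed (equilibriumSet B L ζ) := by
  rw [equilibriumSet, ofPred_forall]
  exact isClosed_iInter fun v => isClosed_eq (by fun_prop) continuous_const

theorem convex_equilibriumSet (ζ : ℝ) : Convex ℝ (equilibriumSet B L ζ) := by
  intro x hx y hy a b _ _ hab v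
  rw [inner_add_left, real_inner_smul_left, real_inner_smul_left, hx v, hy v]
  linear_combination (ζ * L v) * hab

theorem exists_inner_eq_of_mem_equilibriumSet (hL : L ≠ 0) :
    ∃ w : H, ∀ ζ, ∀ τ ∈ equilibriumSet B L ζ, ⟪w, τ⟫_ℝ = ζ := by
  obtain ⟨v₀, hv₀⟩ : ∃ v, L v ≠ 0 := by simpa [DFunLike.ne_iff] using hL
  refine ⟨(L v₀)⁻¹ • B v₀, fun ζ τ hτ => ?_⟩
  rw [real_inner_smul_left, real_inner_comm, hτ v₀]
  field_simp

variable {B L} {w : H}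

theorem biUnion_Ici_equilibriumSet_eq (hw : ∀ ζ, ∀ τ ∈ equilibriumSet B L ζ, ⟪w, τ⟫_ℝ = ζ) :
    ⋃ ζ ∈ Ici 0, equilibriumSet B L ζ =
      {τ | 0 ≤ ⟪w, τ⟫_ℝ} ∩ ⋂ v, {τ | ⟪B v - L v • w, τ⟫_ℝ = 0} := by
  ext τ
  simp only [mem_iUnion₂, mem_Ici, mem_inter_iff, mem_iInter, mem_ofPred_eq, inner_sub_left,
    real_inner_smul_left, sub_eq_zero]
  constructor
  · rintro ⟨ζ, hζ, hτ⟩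
    rw [hw ζ τ hτ]
    exact ⟨hζ, fun v => by rw [real_inner_comm, hτ v, mul_comm]⟩
  · rintro ⟨hτ, hτB⟩
    exact ⟨_, hτ, fun v => by rw [real_inner_comm, hτB v, mul_comm]⟩

theorem isClosed_biUnion_Ici_equilibriumSet (hL : L ≠ 0) :
    IsClosed (⋃ ζ ∈ Ici 0, equilibriumSet B L ζ) := by
  obtain ⟨w, hw⟩ := exists_inner_eq_of_mem_equilibriumSet B L hL
  rw [biUnion_Ici_equilibriumSet_eq hw]
  exact (isClosed_le continuous_const (by fun_prop)).inter
    (isClosed_iInter fun v => isClosed_eq (by fun_prop) continuous_const)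

theorem convex_biUnion_Ici_equilibriumSet (hL : L ≠ 0) :
    Convex ℝ (⋃ ζ ∈ Ici 0, equilibriumSet B L ζ) := by
  obtain ⟨w, hw⟩ := exists_inner_eq_of_mem_equilibriumSet B L hL
  rw [biUnion_Ici_equilibriumSet_eq hw]
  exact (convex_halfSpace_ge (innerSL ℝ w).isLinear 0).inter
    (convex_iInter fun v => convex_hyperplane (innerSL ℝ _).isLinear 0)

theorem eq_of_mem_equilibriumSet (hL : L ≠ 0) {ζ₁ ζ₂ : ℝ} {τ : H}
    (h₁ : τ ∈ equilibriumSet B L ζ₁) (h₂ : τ ∈ equilibriumSet B L ζ₂) : ζ₁ = ζ₂ := by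
  obtain ⟨w, hw⟩ := exists_inner_eq_of_mem_equilibriumSet B L hL
  rw [← hw ζ₁ τ h₁, hw ζ₂ τ h₂]

theorem existsUnique_isMinOn_biased [CompleteSpace H] {P : Set H} (hPclosed : IsClosed P)
    (hPconv : Convex ℝ P) (hP0 : (0 : H) ∈ P) (hL : L ≠ 0) {Λt : Set H}
    (hΛt : Λt = ⋃ ζ ∈ Ici 0, equilibriumSet B L ζ) {ω : H → ℝ}
    (hω : ∀ τ ∈ Λt, τ ∈ equilibriumSet B L (ω τ)) (α : ℝ) :
    ∃! σ, σ ∈ Λt ∩ P ∧ ∀ τ ∈ Λt ∩ P, 1 / 2 * ‖σ‖ ^ 2 - α * ω σ ≤ 1 / 2 * ‖τ‖ ^ 2 - α * ω τ := by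
  obtain ⟨w, hw⟩ := exists_inner_eq_of_mem_equilibriumSet B L hL
  have hJ : ∀ σ ∈ Λt, ∀ τ ∈ Λt, 1 / 2 * ‖σ‖ ^ 2 - α * ω σ ≤ 1 / 2 * ‖τ‖ ^ 2 - α * ω τ ↔
      1 / 2 * ‖σ‖ ^ 2 - ⟪σ, α • w⟫_ℝ ≤ 1 / 2 * ‖τ‖ ^ 2 - ⟪τ, α • w⟫_ℝ := fun σ hσ τ hτ => by
    rw [← hw _ σ (hω σ hσ), ← hw _ τ (hω τ hτ), real_inner_smul_right, real_inner_smul_right,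
      real_inner_comm w σ, real_inner_comm w τ]
  have h0 : (0 : H) ∈ Λt :=
    hΛt ▸ mem_biUnion (mem_Ici.2 le_rfl) (fun v => by simp : (0 : H) ∈ equilibriumSet B L 0)
  obtain ⟨σ, ⟨hσ, hσmin⟩, huniq⟩ :=
    existsUnique_isMinOn_half_norm_sq_sub_inner (K := Λt ∩ P) ⟨0, h0, hP0⟩
    (hΛt ▸ (isClosed_biUnion_Ici_equilibriumSet hL).inter hPclosed)
    (hΛt ▸ (convex_biUnion_Ici_equilibriumSet hL).inter hPconv) (α • w)
  refine ⟨σ, ⟨hσ, fun τ hτ => (hJ σ hσ.1 τ hτ.1).2 (hσmin hτ)⟩, fun σ' ⟨hσ', hσ'min⟩ => ?_⟩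
  exact huniq σ' ⟨hσ', fun τ hτ => (hJ σ' hσ'.1 τ hτ.1).1 (hσ'min τ hτ)⟩

end Equilibrium

theorem biased_problem_unique_solution_general
    {H V : Type*} [NormedAddCommGroup H] [InnerProductSpace ℝ H] [CompleteSpace H]
    [AddCommGroup V] [Module ℝ V]
    (P : Set H) (hPclosed : IsClosed P) (hPconv : Convex ℝ P) (hP0 : (0 : H) ∈ P)
    (B : V →ₗ[ℝ] H) (L : V →ₗ[ℝ] ℝ) (hL : L ≠ 0)
    (Λ : ℝ → Set H)
    (hΛ : ∀ ζ, Λ ζ = {τ : H | ∀ v : V, (inner ℝ τ (B v) : ℝ) = ζ * L v})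
    (Λt : Set H) (hΛt : Λt = ⋃ ζ ∈ Set.Ici (0 : ℝ), Λ ζ)
    (ω : H → ℝ) (hω : ∀ τ ∈ Λt, 0 ≤ ω τ ∧ τ ∈ Λ (ω τ))
    (D : Set ℝ) (hD : D = {ζ : ℝ | 0 ≤ ζ ∧ (Λ ζ ∩ P).Nonempty})
    (φ : ℝ → ℝ)
    (hφ : ∀ ζ, φ ζ = sInf ((fun τ : H => (1 / 2 : ℝ) * ‖τ‖ ^ 2) '' (Λ ζ ∩ P)))
    (ψ : ℝ → ℝ)
    (hψ : ∀ α : ℝ, 0 ≤ α → ψ α ∈ D ∧ ∀ t ∈ D, φ (ψ α) - α * ψ α ≤ φ t - α * t)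
    (α : ℝ) (hα : 0 ≤ α) :
    (∃! σ : H, σ ∈ Λt ∩ P ∧
        ∀ τ ∈ Λt ∩ P,
          (1 / 2 : ℝ) * ‖σ‖ ^ 2 - α * ω σ ≤ (1 / 2 : ℝ) * ‖τ‖ ^ 2 - α * ω τ) ∧
      (∀ σ ∈ Λt ∩ P,
        (∀ τ ∈ Λt ∩ P,
            (1 / 2 : ℝ) * ‖σ‖ ^ 2 - α * ω σ ≤ (1 / 2 : ℝ) * ‖τ‖ ^ 2 - α * ω τ) →
          ψ α = ω σ ∧
            ∀ τ ∈ Λ (ω σ) ∩ P, (1 / 2 : ℝ) * ‖σ‖ ^ 2 ≤ (1 / 2 : ℝ) * ‖τ‖ ^ 2) := by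
  obtain rfl : Λ = equilibriumSet B L := funext hΛ
  have hsol := existsUnique_isMinOn_biased hPclosed hPconv hP0 hL hΛt (fun τ hτ => (hω τ hτ).2) α
  have hlevel : ∀ ζ, 0 ≤ ζ → ∀ τ ∈ equilibriumSet B L ζ, τ ∈ Λt ∧ ω τ = ζ := fun ζ hζ τ hτ =>
    have hτΛt : τ ∈ Λt := hΛt ▸ mem_biUnion (mem_Ici.2 hζ) hτ
    ⟨hτΛt, eq_of_mem_equilibriumSet hL (hω τ hτΛt).2 hτ⟩
  refine ⟨hsol, fun σ hσ hmin => ⟨?_, fun τ hτ => ?_⟩⟩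
  · obtain ⟨hωσ, hσΛ⟩ := hω σ hσ.1
    obtain ⟨⟨hψ0, hψne⟩, hψmin⟩ := hD ▸ hψ α hα
    obtain ⟨τ₁, hτ₁, hφτ₁⟩ := exists_sInf_image_half_norm_sq_eq hψne
      ((isClosed_equilibriumSet B L _).inter hPclosed) ((convex_equilibriumSet B L _).inter hPconv)
    obtain ⟨hτ₁Λt, hωτ₁⟩ := hlevel _ hψ0 τ₁ hτ₁.1
    have hτ₁min : ∀ τ ∈ Λt ∩ P,
        (1 / 2 : ℝ) * ‖τ₁‖ ^ 2 - α * ω τ₁ ≤ (1 / 2 : ℝ) * ‖τ‖ ^ 2 - α * ω τ := fun τ hτ =>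
      calc (1 / 2 : ℝ) * ‖τ₁‖ ^ 2 - α * ω τ₁ = φ (ψ α) - α * ψ α := by rw [hφ, hφτ₁, hωτ₁]
        _ ≤ φ (ω σ) - α * ω σ := hψmin _ ⟨hωσ, σ, hσΛ, hσ.2⟩
        _ ≤ (1 / 2 : ℝ) * ‖σ‖ ^ 2 - α * ω σ := by
          rw [hφ]; gcongr; exact sInf_image_half_norm_sq_le ⟨hσΛ, hσ.2⟩
        _ ≤ (1 / 2 : ℝ) * ‖τ‖ ^ 2 - α * ω τ := hmin τ hτ
    rw [← hωτ₁, hsol.unique ⟨⟨hτ₁Λt, hτ₁.2⟩, hτ₁min⟩ ⟨hσ, hmin⟩]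
  · obtain ⟨hτΛt, hωτ⟩ := hlevel _ (hω σ hσ.1).1 τ hτ.1
    simpa only [hωτ, sub_le_sub_iff_right] using hmin τ ⟨hτΛt, hτ.2⟩

/-- for `α ≥ 0`, the problem `(P*)^α` of minimizing
`J_α(τ) = ½‖τ‖² − α ω(τ)` over the closed convex nonempty set `Λ̃_L ∩ P` has a
unique solution `σ`; moreover `ψ(α) = ω(σ)` and `σ` minimizes `½‖τ‖²` over
`Λ_{ω(σ)L} ∩ P` (i.e. solves `(P*)_ζ` with `ζ = ω(σ)`). -/
theorem biased_problem_unique_solution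
    {H V : Type*} [NormedAddCommGroup H] [InnerProductSpace ℝ H] [CompleteSpace H]
    [AddCommGroup V] [Module ℝ V]
    (P : Set H) (hPclosed : IsClosed P) (hPconv : Convex ℝ P) (hP0 : (0 : H) ∈ P)
    (B : V →ₗ[ℝ] H) (L : V →ₗ[ℝ] ℝ) (hL : L ≠ 0)
    (Λ : ℝ → Set H)
    (hΛ : ∀ ζ, Λ ζ = {τ : H | ∀ v : V, (inner ℝ τ (B v) : ℝ) = ζ * L v})
    (Λt : Set H) (hΛt : Λt = ⋃ ζ ∈ Set.Ici (0 : ℝ), Λ ζ)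
    (ω : H → ℝ) (hω : ∀ τ ∈ Λt, 0 ≤ ω τ ∧ τ ∈ Λ (ω τ))
    (hωaff : ∀ τ₁ ∈ Λt, ∀ τ₂ ∈ Λt, ∀ lam : ℝ, 0 ≤ lam → lam ≤ 1 →
      ω (lam • τ₁ + (1 - lam) • τ₂) = lam * ω τ₁ + (1 - lam) * ω τ₂)
    (c : ℝ) (hωbound : ∀ τ ∈ Λt, ω τ ≤ c * ‖τ‖)
    (D : Set ℝ) (hD : D = {ζ : ℝ | 0 ≤ ζ ∧ (Λ ζ ∩ P).Nonempty})
    (φ : ℝ → ℝ)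
    (hφ : ∀ ζ, φ ζ = sInf ((fun τ : H => (1 / 2 : ℝ) * ‖τ‖ ^ 2) '' (Λ ζ ∩ P)))
    (ψ : ℝ → ℝ)
    (hψ : ∀ α : ℝ, 0 ≤ α → ψ α ∈ D ∧ ∀ t ∈ D, φ (ψ α) - α * ψ α ≤ φ t - α * t)
    (α : ℝ) (hα : 0 ≤ α) :
    (∃! σ : H, σ ∈ Λt ∩ P ∧
        ∀ τ ∈ Λt ∩ P,
          (1 / 2 : ℝ) * ‖σ‖ ^ 2 - α * ω σ ≤ (1 / 2 : ℝ) * ‖τ‖ ^ 2 - α * ω τ) ∧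
      (∀ σ ∈ Λt ∩ P,
        (∀ τ ∈ Λt ∩ P,
            (1 / 2 : ℝ) * ‖σ‖ ^ 2 - α * ω σ ≤ (1 / 2 : ℝ) * ‖τ‖ ^ 2 - α * ω τ) →
          ψ α = ω σ ∧
            ∀ τ ∈ Λ (ω σ) ∩ P, (1 / 2 : ℝ) * ‖σ‖ ^ 2 ≤ (1 / 2 : ℝ) * ‖τ‖ ^ 2) :=
  biased_problem_unique_solution_general P hPclosed hPconv hP0 B L hL Λ hΛ Λt hΛt ω hω D hD φ hφ ψ
    hψ α hα
end
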